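/- For 0 < b < 1, the cubic f(w) = 22w^3 - 23(1-b)w^2 + (5b^2-16b+5)w + b(1-b) has exactly one real root in each of (-b, 0), (0, (1-b)/2), and ((1-b)/2, 1); consequently C_{-b} has four real extraneous fixed points ±b₁, ±b₂ with 0 < b₂ < √((1-b)/2) < b₁ < 1 and two purely imaginary extraneous fixed points ±ib₃ with 0 < b₃ < √b. -/

import Mathlib

/-!
The cubic `f` takes the signs `-, +, -, +` at `-b, 0, (1-b)/2, 1`, so by the intermediate
value theorem it has a root `w₁ < w₂ < w₃` in each of the three intervals; a cubic has no
further roots, so `f = 22 (w - w₁)(w - w₂)(w - w₃)`. The extraneous fixed points are the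
square roots of the `wᵢ`: real for `w₂, w₃ > 0` and purely imaginary for `w₁ < 0`.
-/

open Set Complex

section Cubic

variable {R : Type*} [CommRing R] [IsDomain R]

/-- Vieta's formulas, read off from three distinct roots by divided differences. -/
theorem cubic_eq_mul_of_roots {a c₂ c₁ c₀ x y z : R}
    (hxy : x ≠ y) (hxz : x ≠ z) (hyz : y ≠ z) (hx : a * x ^ 3 + c₂ * x ^ 2 + c₁ * x + c₀ = 0)
    (hy : a * y ^ 3 + c₂ * y ^ 2 + c₁ * y + c₀ = 0)
    (hz : a * z ^ 3 + c₂ * z ^ 2 + c₁ * z + c₀ = 0) (t : R) :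
    a * t ^ 3 + c₂ * t ^ 2 + c₁ * t + c₀ = a * (t - x) * (t - y) * (t - z) := by
  have hxy' : a * (x ^ 2 + x * y + y ^ 2) + c₂ * (x + y) + c₁ = 0 :=
    mul_left_cancel₀ (sub_ne_zero.2 hxy) (by linear_combination hx - hy)
  have hxz' : a * (x ^ 2 + x * z + z ^ 2) + c₂ * (x + z) + c₁ = 0 :=
    mul_left_cancel₀ (sub_ne_zero.2 hxz) (by linear_combination hx - hz)
  have hc₂ : c₂ = -a * (x + y + z) :=
    mul_left_cancel₀ (sub_ne_zero.2 hyz) (by linear_combination hxy' - hxz')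
  linear_combination hx + (t ^ 2 - x ^ 2 - (x + y) * (t - x)) * hc₂ + (t - x) * hxy'

end Cubic

section ExtraneousCubic

variable {R : Type*} [CommRing R]

/-- The cubic `f` with `f(z²) = 0` the extraneous fixed points of `C_{-b}`. -/
def extraneousCubic (b w : R) : R :=
  22 * w ^ 3 - 23 * (1 - b) * w ^ 2 + (5 * b ^ 2 - 16 * b + 5) * w + b * (1 - b)

theorem extraneousCubic_neg_self (b : R) : extraneousCubic b (-b) = -4 * b * (1 + b) ^ 2 := by
  unfold extraneousCubic; ring

theorem extraneousCubic_zero (b : R) : extraneousCubic b 0 = b * (1 - b) := by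
  unfold extraneousCubic; ring

theorem extraneousCubic_half_one_sub (b : ℝ) :
    extraneousCubic b ((1 - b) / 2) = -(1 - b) * (1 + b) ^ 2 / 2 := by
  unfold extraneousCubic; ring

theorem extraneousCubic_one (b : R) : extraneousCubic b 1 = 4 * (1 + b) ^ 2 := by
  unfold extraneousCubic; ring

theorem extraneousCubic_sq (b z : R) : extraneousCubic b (z ^ 2) =
    22 * z ^ 6 - 23 * (1 - b) * z ^ 4 + (5 * b ^ 2 - 16 * b + 5) * z ^ 2 + b * (1 - b) := by
  unfold extraneousCubic; ring

theorem ofReal_extraneousCubic (b w : ℝ) :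
    ((extraneousCubic b w : ℝ) : ℂ) = extraneousCubic (b : ℂ) (w : ℂ) := by
  unfold extraneousCubic; push_cast; rfl

theorem continuous_extraneousCubic (b : ℝ) : Continuous (extraneousCubic b) := by
  unfold extraneousCubic; fun_prop

theorem extraneousCubic_eq_zero_iff [IsDomain R] [CharZero R] {b x y z : R}
    (hxy : x ≠ y) (hxz : x ≠ z) (hyz : y ≠ z) (hx : extraneousCubic b x = 0)
    (hy : extraneousCubic b y = 0) (hz : extraneousCubic b z = 0) (t : R) :
    extraneousCubic b t = 0 ↔ t = x ∨ t = y ∨ t = z := by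
  simp only [extraneousCubic] at hx hy hz
  have hfactor := cubic_eq_mul_of_roots (a := 22) (c₂ := -(23 * (1 - b)))
    (c₁ := 5 * b ^ 2 - 16 * b + 5) (c₀ := b * (1 - b)) hxy hxz hyz
    (by linear_combination hx) (by linear_combination hy) (by linear_combination hz) t
  rw [show extraneousCubic b t = 22 * (t - x) * (t - y) * (t - z) by
    unfold extraneousCubic; linear_combination hfactor]
  simp only [mul_eq_zero, OfNat.ofNat_ne_zero, false_or, sub_eq_zero, or_assoc]

end ExtraneousCubic

theorem exists_roots_extraneousCubic {b : ℝ} (hb0 : 0 < b) (hb1 : b < 1) :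
    ∃ w₁ ∈ Ioo (-b) 0, ∃ w₂ ∈ Ioo 0 ((1 - b) / 2), ∃ w₃ ∈ Ioo ((1 - b) / 2) 1,
      extraneousCubic b w₁ = 0 ∧ extraneousCubic b w₂ = 0 ∧ extraneousCubic b w₃ = 0 := by
  have hf {l u : ℝ} : ContinuousOn (extraneousCubic b) (Icc l u) :=
    (continuous_extraneousCubic b).continuousOn
  have hneg : extraneousCubic b (-b) < 0 := by
    rw [extraneousCubic_neg_self]; nlinarith [mul_pos hb0 (by positivity : (0 : ℝ) < (1 + b) ^ 2)]
  have hzero : 0 < extraneousCubic b 0 := by rw [extraneousCubic_zero]; nlinarith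
  have hmid : extraneousCubic b ((1 - b) / 2) < 0 := by
    rw [extraneousCubic_half_one_sub]
    nlinarith [mul_pos (by linarith : (0 : ℝ) < 1 - b) (by positivity : (0 : ℝ) < (1 + b) ^ 2)]
  have hone : 0 < extraneousCubic b 1 := by rw [extraneousCubic_one]; positivity
  obtain ⟨w₁, hw₁, h₁⟩ := intermediate_value_Ioo (by linarith) hf ⟨hneg, hzero⟩
  obtain ⟨w₂, hw₂, h₂⟩ := intermediate_value_Ioo' (by linarith) hf ⟨hmid, hzero⟩
  obtain ⟨w₃, hw₃, h₃⟩ := intermediate_value_Ioo (by linarith) hf ⟨hmid, hone⟩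
  exact ⟨w₁, hw₁, w₂, hw₂, w₃, hw₃, h₁, h₂, h₃⟩

namespace Complex

theorem sq_eq_ofReal_iff_of_nonneg {w : ℝ} (hw : 0 ≤ w) {z : ℂ} :
    z ^ 2 = w ↔ z = (√w : ℝ) ∨ z = -((√w : ℝ) : ℂ) := by
  rw [← sq_eq_sq_iff_eq_or_eq_neg, ← ofReal_pow, Real.sq_sqrt hw]

theorem sq_eq_ofReal_iff_of_nonpos {w : ℝ} (hw : w ≤ 0) {z : ℂ} :
    z ^ 2 = w ↔ z = I * (√(-w) : ℝ) ∨ z = -(I * (√(-w) : ℝ)) := by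
  rw [← sq_eq_sq_iff_eq_or_eq_neg, mul_pow, I_sq, ← ofReal_pow, Real.sq_sqrt (neg_nonneg.2 hw)]
  push_cast; ring_nf

end Complex

theorem extraneousCubic_sq_eq_zero_iff {b w₁ w₂ w₃ : ℝ} (h₁₂ : w₁ ≠ w₂) (h₁₃ : w₁ ≠ w₃)
    (h₂₃ : w₂ ≠ w₃) (h₁ : extraneousCubic b w₁ = 0) (h₂ : extraneousCubic b w₂ = 0)
    (h₃ : extraneousCubic b w₃ = 0) (hw₁ : w₁ ≤ 0) (hw₂ : 0 ≤ w₂) (hw₃ : 0 ≤ w₃) (z : ℂ) :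
    extraneousCubic (b : ℂ) (z ^ 2) = 0 ↔
      z = (√w₃ : ℝ) ∨ z = -((√w₃ : ℝ) : ℂ) ∨ z = (√w₂ : ℝ) ∨ z = -((√w₂ : ℝ) : ℂ) ∨
        z = I * (√(-w₁) : ℝ) ∨ z = -(I * (√(-w₁) : ℝ)) := by
  have hroot {w : ℝ} (h : extraneousCubic b w = 0) : extraneousCubic (b : ℂ) w = 0 := by
    rw [← ofReal_extraneousCubic, h, ofReal_zero]
  rw [extraneousCubic_eq_zero_iff (ofReal_injective.ne h₁₂) (ofReal_injective.ne h₁₃)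
    (ofReal_injective.ne h₂₃) (hroot h₁) (hroot h₂) (hroot h₃), sq_eq_ofReal_iff_of_nonpos hw₁,
    sq_eq_ofReal_iff_of_nonneg hw₂, sq_eq_ofReal_iff_of_nonneg hw₃]
  tauto

/-- For `0 < b < 1`, the cubic `f(w) = 22w³ - 23(1-b)w² + (5b²-16b+5)w + b(1-b)` has
exactly one root in each of `(-b,0)`, `(0,(1-b)/2)` and `((1-b)/2,1)`; consequently
`C_{-b}` has four real extraneous fixed points `±b₁, ±b₂` with
`0 < b₂ < √((1-b)/2) < b₁ < 1` and two purely imaginary ones `±ib₃` with `0 < b₃ < √b`. -/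
theorem stmt18 (b : ℝ) (hb0 : 0 < b) (hb1 : b < 1) :
    (∃! w : ℝ, w ∈ Set.Ioo (-b) 0 ∧
      22 * w ^ 3 - 23 * (1 - b) * w ^ 2 + (5 * b ^ 2 - 16 * b + 5) * w + b * (1 - b) = 0) ∧
    (∃! w : ℝ, w ∈ Set.Ioo 0 ((1 - b) / 2) ∧
      22 * w ^ 3 - 23 * (1 - b) * w ^ 2 + (5 * b ^ 2 - 16 * b + 5) * w + b * (1 - b) = 0) ∧
    (∃! w : ℝ, w ∈ Set.Ioo ((1 - b) / 2) 1 ∧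
      22 * w ^ 3 - 23 * (1 - b) * w ^ 2 + (5 * b ^ 2 - 16 * b + 5) * w + b * (1 - b) = 0) ∧
    (∃ b1 b2 b3 : ℝ,
      0 < b2 ∧ b2 < Real.sqrt ((1 - b) / 2) ∧ Real.sqrt ((1 - b) / 2) < b1 ∧ b1 < 1 ∧
      0 < b3 ∧ b3 < Real.sqrt b ∧
      ∀ z : ℂ,
        (22 * z ^ 6 - 23 * (1 - (b : ℂ)) * z ^ 4
            + (5 * (b : ℂ) ^ 2 - 16 * (b : ℂ) + 5) * z ^ 2 + (b : ℂ) * (1 - (b : ℂ)) = 0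
          ↔ (z = (b1 : ℂ) ∨ z = -(b1 : ℂ) ∨ z = (b2 : ℂ) ∨ z = -(b2 : ℂ)
              ∨ z = Complex.I * (b3 : ℂ) ∨ z = -(Complex.I * (b3 : ℂ))))) := by
  obtain ⟨w₁, ⟨hw₁l, hw₁r⟩, w₂, ⟨hw₂l, hw₂r⟩, w₃, ⟨hw₃l, hw₃r⟩, h₁, h₂, h₃⟩ :=
    exists_roots_extraneousCubic hb0 hb1
  have h₁₂ : w₁ ≠ w₂ := by linarith
  have h₁₃ : w₁ ≠ w₃ := by linarith
  have h₂₃ : w₂ ≠ w₃ := by linarith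
  have hroots := extraneousCubic_eq_zero_iff h₁₂ h₁₃ h₂₃ h₁ h₂ h₃
  have hsextic (z : ℂ) :=
    extraneousCubic_sq_eq_zero_iff h₁₂ h₁₃ h₂₃ h₁ h₂ h₃ hw₁r.le hw₂l.le (by linarith) z
  simp only [extraneousCubic_sq] at hsextic
  have hunique {l u w : ℝ} (hw : w ∈ Ioo l u) (hw0 : extraneousCubic b w = 0)
      (hother : ∀ y ∈ Ioo l u, y = w₁ ∨ y = w₂ ∨ y = w₃ → y = w) :
      ∃! y, y ∈ Ioo l u ∧ extraneousCubic b y = 0 :=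
    ⟨w, ⟨hw, hw0⟩, fun y hy => hother y hy.1 ((hroots y).1 hy.2)⟩
  refine ⟨hunique ⟨hw₁l, hw₁r⟩ h₁ ?_, hunique ⟨hw₂l, hw₂r⟩ h₂ ?_, hunique ⟨hw₃l, hw₃r⟩ h₃ ?_,
    √w₃, √w₂, √(-w₁), Real.sqrt_pos.2 hw₂l, Real.sqrt_lt_sqrt hw₂l.le hw₂r,
    Real.sqrt_lt_sqrt (by linarith) hw₃l, (Real.sqrt_lt' one_pos).2 (by linarith),
    Real.sqrt_pos.2 (neg_pos.2 hw₁r), Real.sqrt_lt_sqrt (by linarith) (by linarith), hsextic⟩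
  all_goals
    rintro y ⟨hyl, hyr⟩ (rfl | rfl | rfl) <;> first | rfl | (exfalso; linarith)
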